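/- For h(s,x) = s²/(s²+c²)·(s²+c²−x²) with c > 0, the derivative in x of the ratio h_x/h_s equals −s(s²+c²)·(c⁴ + c²(x²+2s²) + s⁴)/(c⁴ − c²(x²−2s²) + s⁴)², and in particular is strictly negative for all (s,x) with s > 0 and x² < s²+c². -/

import Mathlib

noncomputable def hEll (c s x : ℝ) : ℝ := s^2 / (s^2 + c^2) * (s^2 + c^2 - x^2)

lemma deriv_hEll_right (c s t : ℝ) :
    deriv (fun t' => hEll c s t') t = -(2 * s^2 / (s^2 + c^2)) * t := by
  have h := ((hasDerivAt_pow 2 t).const_sub (s^2 + c^2)).const_mul (s^2 / (s^2 + c^2))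
  exact (h.congr_deriv (by ring)).deriv

lemma deriv_hEll_left (c s t : ℝ) (hA : s^2 + c^2 ≠ 0) :
    deriv (fun u => hEll c u t) s = 2 * s / (s^2 + c^2)^2 * ((s^2 + c^2)^2 - c^2 * t^2) := by
  have hsq : HasDerivAt (fun u : ℝ => u^2) (2 * s) s := by simpa using hasDerivAt_pow 2 s
  have h : HasDerivAt (fun u => hEll c u t)
      ((2 * s * (s^2 + c^2) - s^2 * (2 * s)) / (s^2 + c^2)^2 * (s^2 + c^2 - t^2)
        + s^2 / (s^2 + c^2) * (2 * s)) s :=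
    (hsq.div (hsq.add_const (c^2)) hA).mul ((hsq.add_const (c^2)).sub_const (t^2))
  rw [h.deriv]
  field_simp
  ring

/-- Holds also where `(s²+c²)² = c² t²`: there both divisions are by `0`. -/
lemma hEll_slope_ratio_eq (c s : ℝ) (hA : s^2 + c^2 ≠ 0) :
    (fun t => deriv (fun t' => hEll c s t') t / deriv (fun u => hEll c u t) s)
      = fun t => -(s * (s^2 + c^2)) * t / ((s^2 + c^2)^2 - c^2 * t^2) := by
  funext t
  have hcoef : -(2 * s^2 / (s^2 + c^2)) / (2 * s / (s^2 + c^2)^2) = -(s * (s^2 + c^2)) := by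
    rcases eq_or_ne s 0 with rfl | hs
    · simp
    · field_simp
  rw [deriv_hEll_right, deriv_hEll_left c s t hA, mul_div_mul_comm, hcoef, mul_div_assoc]

lemma hasDerivAt_mul_div_sub_mul_sq (k a b x : ℝ) (hx : a - b * x^2 ≠ 0) :
    HasDerivAt (fun t => k * t / (a - b * t^2)) (k * (a + b * x^2) / (a - b * x^2)^2) x := by
  have hnum : HasDerivAt (fun t : ℝ => k * t) k x := by
    simpa using (hasDerivAt_id x).const_mul k
  have hden := ((hasDerivAt_pow 2 x).const_mul b).const_sub a
  refine (hnum.div hden hx).congr_deriv ?_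
  ring

theorem stmt2_general (c : ℝ) (s x : ℝ) (hs : 0 < s) (hx : x^2 < s^2 + c^2) :
    deriv (fun t => deriv (fun t' => hEll c s t') t / deriv (fun u => hEll c u t) s) x
      = -(s * (s^2 + c^2)) * (c^4 + c^2 * (x^2 + 2*s^2) + s^4)
          / (c^4 - c^2 * (x^2 - 2*s^2) + s^4)^2 ∧
    deriv (fun t => deriv (fun t' => hEll c s t') t / deriv (fun u => hEll c u t) s) x < 0 := by
  have hA : 0 < s^2 + c^2 := by positivity
  have hcx : c^2 * x^2 ≤ c^2 * (s^2 + c^2) := mul_le_mul_of_nonneg_left hx.le (sq_nonneg c)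
  have hQ : 0 < c^4 - c^2 * (x^2 - 2*s^2) + s^4 := by nlinarith [mul_pos hA (pow_pos hs 2)]
  have hderiv : deriv (fun t => deriv (fun t' => hEll c s t') t / deriv (fun u => hEll c u t) s) x
      = -(s * (s^2 + c^2)) * (c^4 + c^2 * (x^2 + 2*s^2) + s^4)
          / (c^4 - c^2 * (x^2 - 2*s^2) + s^4)^2 := by
    rw [hEll_slope_ratio_eq c s hA.ne']
    have hD : (s^2 + c^2)^2 - c^2 * x^2 = c^4 - c^2 * (x^2 - 2*s^2) + s^4 := by ring
    have hN : (s^2 + c^2)^2 + c^2 * x^2 = c^4 + c^2 * (x^2 + 2*s^2) + s^4 := by ring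
    rw [(hasDerivAt_mul_div_sub_mul_sq _ _ _ x (hD ▸ hQ.ne')).deriv, hD, hN]
  refine ⟨hderiv, hderiv ▸ div_neg_of_neg_of_pos ?_ (by positivity)⟩
  have hP : 0 < c^4 + c^2 * (x^2 + 2*s^2) + s^4 := by positivity
  nlinarith [mul_pos (mul_pos hs hA) hP]

/-- the `x`-derivative of `h_x/h_s` equals
`−s(s²+c²)(c⁴+c²(x²+2s²)+s⁴)/(c⁴−c²(x²−2s²)+s⁴)²`, and is strictly negative. -/
theorem stmt2 (c : ℝ) (hc : 0 < c) (s x : ℝ) (hs : 0 < s) (hx : x^2 < s^2 + c^2) :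
    deriv (fun t => deriv (fun t' => hEll c s t') t / deriv (fun u => hEll c u t) s) x
      = -(s * (s^2 + c^2)) * (c^4 + c^2 * (x^2 + 2*s^2) + s^4)
          / (c^4 - c^2 * (x^2 - 2*s^2) + s^4)^2 ∧
    deriv (fun t => deriv (fun t' => hEll c s t') t / deriv (fun u => hEll c u t) s) x < 0 :=
  stmt2_general c s x hs hx
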